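/- Let ω ∈ {0,1,2}^ℕ be such that i_0(ω), i_1(ω), i_2(ω) are all finite. Let ε_2 = 0 if σ^{i_2(ω)}ω is the constant sequence (2,2,2,…) and ε_2 = 1 otherwise. Then the element a·b_ω of Aut(T) has order exactly 2^{i_2(ω) + ε_2}. -/

import Mathlib

namespace Grig

/-- Sequences ω ∈ {0,1,2}^ℕ (0-indexed: `ω n` is the paper's ω_{n+1}). -/
abbrev Seq := ℕ → Fin 3

/-- The shifted sequence σω. -/
def shift (ω : Seq) : Seq := fun n => ω (n + 1)

/-- The n-fold shifted sequence σⁿω. -/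
def shiftn (n : ℕ) (ω : Seq) : Seq := fun m => ω (m + n)

/-- The rooted automorphism `a`, as a map on words over {0,1} (encoded as `List Bool`). -/
def aMap : List Bool → List Bool
  | [] => []
  | x :: w => (!x) :: w

lemma aMap_invol : ∀ w, aMap (aMap w) = w := by
  intro w; cases w <;> simp [aMap]

/-- The rooted automorphism `a`. -/
def aPerm : Equiv.Perm (List Bool) := ⟨aMap, aMap, aMap_invol, aMap_invol⟩

/-- The directed automorphism with "trivial tag" `k` of the Grigorchuk group `G_ω`:
`k = 2` gives `b_ω`, `k = 1` gives `c_ω`, `k = 0` gives `d_ω`.  Its section at the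
vertex 1 is the corresponding automorphism for σω, and its section at the vertex 0
is `a` if ω₁ ≠ k and trivial if ω₁ = k. -/
def genMap (k : Fin 3) : Seq → List Bool → List Bool
  | _, [] => []
  | ω, false :: w => false :: (if ω 0 = k then w else aMap w)
  | ω, true :: w => true :: genMap k (shift ω) w

lemma genMap_invol (k : Fin 3) : ∀ (w : List Bool) (ω : Seq), genMap k ω (genMap k ω w) = w := by
  intro w
  induction w with
  | nil => intro ω; rfl
  | cons x w ih =>
      intro ω
      cases x with
      | false => by_cases h : ω 0 = k <;> simp [genMap, h, aMap_invol]
      | true => simp [genMap, ih]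

def genPerm (k : Fin 3) (ω : Seq) : Equiv.Perm (List Bool) :=
  ⟨genMap k ω, genMap k ω, fun w => genMap_invol k w ω, fun w => genMap_invol k w ω⟩

/-- The generator `b_ω`. -/
def b (ω : Seq) : Equiv.Perm (List Bool) := genPerm 2 ω
/-- The generator `c_ω`. -/
def c (ω : Seq) : Equiv.Perm (List Bool) := genPerm 1 ω
/-- The generator `d_ω`. -/
def d (ω : Seq) : Equiv.Perm (List Bool) := genPerm 0 ω

/-- The Grigorchuk group `G_ω = ⟨a, b_ω, c_ω, d_ω⟩`, as a subgroup of the group of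
permutations of the vertices of the binary rooted tree.  (Every generator preserves
word length and prefixes, so `G_ω` consists of automorphisms of the tree.) -/
def G (ω : Seq) : Subgroup (Equiv.Perm (List Bool)) :=
  Subgroup.closure {aPerm, b ω, c ω, d ω}

lemma aPerm_mem (ω : Seq) : aPerm ∈ G ω := Subgroup.subset_closure (by simp)
lemma b_mem (ω : Seq) : b ω ∈ G ω := Subgroup.subset_closure (by simp)
lemma c_mem (ω : Seq) : c ω ∈ G ω := Subgroup.subset_closure (by simp)
lemma d_mem (ω : Seq) : d ω ∈ G ω := Subgroup.subset_closure (by simp)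

/-- `a` as an element of `G_ω`. -/
def aSub (ω : Seq) : ↥(G ω) := ⟨aPerm, aPerm_mem ω⟩
/-- `b_ω` as an element of `G_ω`. -/
def bSub (ω : Seq) : ↥(G ω) := ⟨b ω, b_mem ω⟩
/-- `c_ω` as an element of `G_ω`. -/
def cSub (ω : Seq) : ↥(G ω) := ⟨c ω, c_mem ω⟩
/-- `d_ω` as an element of `G_ω`. -/
def dSub (ω : Seq) : ↥(G ω) := ⟨d ω, d_mem ω⟩

/-- The subgroup of permutations of the tree fixing every vertex of level `n`. -/
def levelStab (n : ℕ) : Subgroup (Equiv.Perm (List Bool)) where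
  carrier := {f | ∀ w : List Bool, w.length = n → f w = w}
  one_mem' := by intro w _; rfl
  mul_mem' := by
    intro f g hf hg w hw
    rw [Equiv.Perm.mul_apply, hg w hw, hf w hw]
  inv_mem' := by
    intro f hf w hw
    calc f⁻¹ w = f⁻¹ (f w) := by rw [hf w hw]
    _ = w := f.symm_apply_apply w

/-- The `n`-th level stabiliser `St_{G_ω}(n)` (as a subgroup of the ambient
permutation group). -/
def St (ω : Seq) (n : ℕ) : Subgroup (Equiv.Perm (List Bool)) := G ω ⊓ levelStab n

/-- The `n`-th level stabiliser `St_{G_ω}(n)` seen as a subgroup of `G_ω`. -/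
def stab (ω : Seq) (n : ℕ) : Subgroup ↥(G ω) := (levelStab n).subgroupOf (G ω)

lemma aMap_length (w : List Bool) : (aMap w).length = w.length := by
  cases w <;> simp [aMap]

lemma genMap_length (k : Fin 3) :
    ∀ (w : List Bool) (ω : Seq), (genMap k ω w).length = w.length := by
  intro w
  induction w with
  | nil => intro ω; rfl
  | cons x w ih =>
      intro ω
      cases x with
      | false => by_cases h : ω 0 = k <;> simp [genMap, h, aMap_length]
      | true => simp [genMap, ih]

/-- The subgroup of length-preserving permutations of the set of words. -/
def lenPres : Subgroup (Equiv.Perm (List Bool)) where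
  carrier := {f | ∀ w : List Bool, (f w).length = w.length}
  one_mem' := by intro w; rfl
  mul_mem' := by
    intro f g hf hg w
    rw [Equiv.Perm.mul_apply, hf, hg]
  inv_mem' := by
    intro f hf w
    conv_rhs => rw [← show f (f⁻¹ w) = w from f.apply_symm_apply w]
    rw [hf]

lemma G_le_lenPres (ω : Seq) : G ω ≤ lenPres := by
  rw [G]
  refine (Subgroup.closure_le _).2 ?_
  intro x hx
  simp only [Set.mem_insert_iff, Set.mem_singleton_iff] at hx
  rcases hx with rfl | rfl | rfl | rfl
  · exact fun w => aMap_length w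
  · exact fun w => genMap_length 2 w ω
  · exact fun w => genMap_length 1 w ω
  · exact fun w => genMap_length 0 w ω

instance stab_normal (ω : Seq) (n : ℕ) : (stab ω n).Normal := by
  constructor
  intro h hh g
  simp only [stab, Subgroup.mem_subgroupOf] at hh ⊢
  intro w hw
  have hginv : ((g : Equiv.Perm (List Bool))⁻¹ w).length = n := by
    rw [G_le_lenPres ω ((G ω).inv_mem g.2) w, hw]
  have : ((h : Equiv.Perm (List Bool))) ((g : Equiv.Perm (List Bool))⁻¹ w)
      = (g : Equiv.Perm (List Bool))⁻¹ w := hh _ hginv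
  simp only [Subgroup.coe_mul, InvMemClass.coe_inv, Equiv.Perm.mul_apply]
  rw [this]; exact Equiv.apply_symm_apply _ w

/-- A (spherical) system of generators of a group. -/
def SphericalSystem {Q : Type*} [Group Q] {r : ℕ} (T : Fin r → Q) : Prop :=
  3 ≤ r ∧ (∀ i, T i ≠ 1) ∧ Subgroup.closure (Set.range T) = ⊤ ∧ (List.ofFn T).prod = 1

/-- The set Σ(T): the union of all conjugates of the cyclic subgroups generated by
the entries of `T`. -/
def SigmaSet {Q : Type*} [Group Q] {r : ℕ} (T : Fin r → Q) : Set Q :=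
  ⋃ (g : Q) (i : Fin r), (fun x => g⁻¹ * x * g) '' (Subgroup.zpowers (T i) : Set Q)

/-- An (unmixed) ramification structure of size `(r₁, r₂)` for a group `Q`. -/
def HasRamificationStructure (Q : Type*) [Group Q] (r₁ r₂ : ℕ) : Prop :=
  ∃ (T₁ : Fin r₁ → Q) (T₂ : Fin r₂ → Q),
    SphericalSystem T₁ ∧ SphericalSystem T₂ ∧ SigmaSet T₁ ∩ SigmaSet T₂ = {1}

/-- `i_k(ω) = min {n ≥ 1 : ω_n = k}` (meaningful when some entry of ω equals `k`;
with our 0-indexing this is `sInf {n | ω n = k} + 1`). -/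
noncomputable def ikFin (k : Fin 3) (ω : Seq) : ℕ := sInf {n | ω n = k} + 1

/-- `m(ω) = max {n ≥ 1 : ω_1 = ⋯ = ω_n}` for a non-constant sequence ω;
with our 0-indexing this is the least index where ω differs from ω 0. -/
noncomputable def mval (ω : Seq) : ℕ := sInf {n | ω n ≠ ω 0}


/-- The normal closure of the element `x` relative to the subgroup `H`:
the subgroup generated by all `H`-conjugates of `x`. -/
def nclIn (H : Subgroup (Equiv.Perm (List Bool))) (x : Equiv.Perm (List Bool)) :
    Subgroup (Equiv.Perm (List Bool)) :=
  Subgroup.closure {y | ∃ g ∈ H, y = g * x * g⁻¹}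

/-- The `d`-generator of `G_ω`: `d_ω` if ω₁ = 0, `c_ω` if ω₁ = 1 and `b_ω` if ω₁ = 2;
with our encoding this is simply `genPerm (ω 0) ω`. -/
def dGenPerm (ω : Seq) : Equiv.Perm (List Bool) := genPerm (ω 0) ω

/-- The subgroup of permutations fixing every word that does not have `u` as a prefix. -/
def awayStab (u : List Bool) : Subgroup (Equiv.Perm (List Bool)) where
  carrier := {f | ∀ w : List Bool, ¬ u <+: w → f w = w}
  one_mem' := by intro w _; rfl
  mul_mem' := by
    intro f g hf hg w hw
    rw [Equiv.Perm.mul_apply, hg w hw, hf w hw]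
  inv_mem' := by
    intro f hf w hw
    calc f⁻¹ w = f⁻¹ (f w) := by rw [hf w hw]
    _ = w := f.symm_apply_apply w

/-- The rigid vertex stabiliser `Rist_{G_ω}(u)`. -/
def Rist (ω : Seq) (u : List Bool) : Subgroup (Equiv.Perm (List Bool)) :=
  G ω ⊓ awayStab u

/-- The section map φ_u : for an automorphism `f` fixing the vertex `u`, the value
`sectionFun u f` is the section of `f` at `u` (as a map on words). -/
def sectionFun (u : List Bool) (f : Equiv.Perm (List Bool)) : List Bool → List Bool :=
  fun v => (f (u ++ v)).drop u.length

/-- The `d`-generator `x_ω` of `G_ω`, as an element of `G_ω`. -/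
def xGen (ω : Seq) : ↥(G ω) :=
  if ω 0 = 0 then ⟨d ω, Subgroup.subset_closure (by simp)⟩
  else if ω 0 = 1 then ⟨c ω, Subgroup.subset_closure (by simp)⟩
  else ⟨b ω, Subgroup.subset_closure (by simp)⟩

/-- The `c`-generator `y_ω` of `G_ω` (determined by ω_{m(ω)+1}), as an element of `G_ω`. -/
noncomputable def yGen (ω : Seq) : ↥(G ω) :=
  if ω (mval ω) = 0 then ⟨d ω, Subgroup.subset_closure (by simp)⟩
  else if ω (mval ω) = 1 then ⟨c ω, Subgroup.subset_closure (by simp)⟩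
  else ⟨b ω, Subgroup.subset_closure (by simp)⟩

open scoped Classical in
/-- The bound `M` of the main theorem. -/
noncomputable def Mval (ω : Seq) : ℕ :=
  if ∀ k : Fin 3, ∃ n, shift ω n = k then
    (Finset.univ.sup fun k : Fin 3 => ikFin k (shift ω)) + 4
  else if ∀ n, shift ω n = shift ω 0 then 4
  else ((Finset.univ.filter fun k : Fin 3 => ∃ n, shift ω n = k).sup
          fun k => ikFin k (shift ω)) + 4


end Grig

namespace Grig

/-! ### Auxiliary machinery for Statement 4 -/

def pairMap (f₀ f₁ : List Bool → List Bool) : List Bool → List Bool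
  | [] => []
  | false :: w => false :: f₀ w
  | true :: w => true :: f₁ w

def pairPerm (f₀ f₁ : Equiv.Perm (List Bool)) : Equiv.Perm (List Bool) where
  toFun := pairMap f₀ f₁
  invFun := pairMap f₀.symm f₁.symm
  left_inv := by
    intro w
    rcases w with _ | ⟨x, w⟩
    · rfl
    · cases x <;> simp [pairMap]
  right_inv := by
    intro w
    rcases w with _ | ⟨x, w⟩
    · rfl
    · cases x <;> simp [pairMap]

lemma pairPerm_mul (f₀ f₁ g₀ g₁ : Equiv.Perm (List Bool)) :
    pairPerm f₀ f₁ * pairPerm g₀ g₁ = pairPerm (f₀ * g₀) (f₁ * g₁) := by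
  ext w
  rcases w with _ | ⟨x, w⟩
  · rfl
  · cases x <;> rfl

lemma pairPerm_one : pairPerm 1 1 = 1 := by
  ext w
  rcases w with _ | ⟨x, w⟩
  · rfl
  · cases x <;> rfl

lemma pairPerm_pow (f₀ f₁ : Equiv.Perm (List Bool)) (n : ℕ) :
    (pairPerm f₀ f₁) ^ n = pairPerm (f₀ ^ n) (f₁ ^ n) := by
  induction n with
  | zero => simp [pairPerm_one]
  | succ n ih => rw [pow_succ, ih, pairPerm_mul, ← pow_succ, ← pow_succ]

lemma pairPerm_eq_one_iff (f₀ f₁ : Equiv.Perm (List Bool)) :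
    pairPerm f₀ f₁ = 1 ↔ f₀ = 1 ∧ f₁ = 1 := by
  constructor
  · intro h
    constructor
    · refine Equiv.ext fun w => ?_
      have h' := DFunLike.congr_fun h (false :: w)
      simpa [pairPerm, pairMap] using h'
    · refine Equiv.ext fun w => ?_
      have h' := DFunLike.congr_fun h (true :: w)
      simpa [pairPerm, pairMap] using h'
  · rintro ⟨rfl, rfl⟩
    exact pairPerm_one

lemma aPerm_mul_self : aPerm * aPerm = 1 :=
  Equiv.ext fun w => aMap_invol w

lemma aPerm_inv : aPerm⁻¹ = aPerm := inv_eq_of_mul_eq_one_right aPerm_mul_self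

lemma b_mul_self (ω : Seq) : b ω * b ω = 1 :=
  Equiv.ext fun w => genMap_invol 2 w ω

lemma b_inv (ω : Seq) : (b ω)⁻¹ = b ω := inv_eq_of_mul_eq_one_right (b_mul_self ω)

lemma genMap_two_id_iff : ∀ (ω : Seq), (∀ w, genMap 2 ω w = w) ↔ ∀ n, ω n = 2 := by
  have fwd : ∀ (n : ℕ) (ω : Seq), (∀ w, genMap 2 ω w = w) → ω n = 2 := by
    intro n
    induction n with
    | zero =>
        intro ω hid
        by_contra h0
        have := hid [false, true]
        simp [genMap, aMap, h0] at this
    | succ n ih =>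
        intro ω hid
        have hsh : ∀ w, genMap 2 (shift ω) w = w := by
          intro w
          have := hid (true :: w)
          simpa [genMap] using this
        exact ih (shift ω) hsh
  intro ω
  constructor
  · intro hid n; exact fwd n ω hid
  · intro hall w
    induction w generalizing ω with
    | nil => rfl
    | cons x w ihw =>
        cases x with
        | false => simp [genMap, hall 0]
        | true => simp [genMap, ihw (shift ω) (fun n => hall (n + 1))]

lemma b_eq_one_iff (ω : Seq) : b ω = 1 ↔ ∀ n, ω n = 2 := by
  rw [← genMap_two_id_iff ω]
  constructor
  · intro h w
    exact DFunLike.congr_fun h w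
  · intro h
    exact Equiv.ext fun w => h w

lemma ab_ne_one (ω : Seq) : aPerm * b ω ≠ 1 := by
  intro h
  have h' := DFunLike.congr_fun h [false]
  simp [b, genPerm, genMap, aMap, aPerm, Equiv.Perm.mul_apply] at h'

lemma ab_sq (ω : Seq) :
    (aPerm * b ω) ^ 2 =
      pairPerm (b (shift ω) * (if ω 0 = 2 then 1 else aPerm))
               ((if ω 0 = 2 then 1 else aPerm) * b (shift ω)) := by
  ext w
  rcases w with _ | ⟨x, w⟩
  · by_cases h : ω 0 = 2 <;>
      simp [sq, Equiv.Perm.mul_apply, aPerm, aMap, b, genPerm, genMap, pairPerm, pairMap, h]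
  · cases x <;> by_cases h : ω 0 = 2 <;>
      simp [sq, Equiv.Perm.mul_apply, aPerm, aMap, b, genPerm, genMap, pairPerm, pairMap, h]

open scoped Classical in
/-- The exponent `i₂(ω) + ε₂` of the order of `a b_ω`. -/
noncomputable def Nval (ω : Seq) : ℕ :=
  ikFin 2 ω + if ∀ m, shiftn (ikFin 2 ω) ω m = 2 then 0 else 1

lemma one_le_Nval (ω : Seq) : 1 ≤ Nval ω := by
  have h1 : 1 ≤ ikFin 2 ω := Nat.succ_le_succ (Nat.zero_le _)
  exact le_trans h1 (Nat.le_add_right _ _)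

lemma key_pow (i : ℕ) : ∀ ω : Seq, sInf {n | ω n = (2 : Fin 3)} = i → (∃ m, ω m = 2) →
    (aPerm * b ω) ^ 2 ^ Nval ω = 1 ∧ (aPerm * b ω) ^ 2 ^ (Nval ω - 1) ≠ 1 := by
  induction i with
  | zero =>
      intro ω h0 hex
      have hω0 : ω 0 = 2 := by
        have hmem := Nat.sInf_mem (s := {n | ω n = (2 : Fin 3)}) hex
        rw [h0] at hmem
        exact hmem
      have hik : ikFin 2 ω = 1 := by simp [ikFin, h0]
      by_cases hc : ∀ m, shiftn (ikFin 2 ω) ω m = 2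
      · have hb1 : b (shift ω) = 1 := by
          refine (b_eq_one_iff _).2 ?_
          intro n
          have := hc n
          rw [hik] at this
          exact this
        have hN : Nval ω = 1 := by
          simp only [Nval, hik]
          rw [if_pos hc]
        rw [hN]
        constructor
        · have h2 : (2 : ℕ) ^ 1 = 2 := rfl
          rw [h2, ab_sq, if_pos hω0, hb1, one_mul, pairPerm_one]
        · simpa using ab_ne_one ω
      · have hbne : b (shift ω) ≠ 1 := by
          intro h1
          apply hc
          intro m
          rw [hik]
          exact (b_eq_one_iff _).1 h1 m
        have hN : Nval ω = 2 := by
          simp only [Nval, hik]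
          rw [if_neg hc]
        rw [hN]
        constructor
        · have h4 : (2 : ℕ) ^ 2 = 2 * 2 := rfl
          rw [h4, pow_mul, ab_sq, if_pos hω0, mul_one, one_mul, pairPerm_pow, sq,
            b_mul_self, pairPerm_one]
        · have h2 : (2 : ℕ) ^ (2 - 1) = 2 := rfl
          rw [h2]
          intro hcontr
          rw [ab_sq, if_pos hω0, mul_one, one_mul] at hcontr
          exact hbne ((pairPerm_eq_one_iff _ _).1 hcontr).1
  | succ i ih =>
      intro ω h0 hex
      have hω0 : ω 0 ≠ 2 := by
        intro h
        have hle : sInf {n | ω n = (2 : Fin 3)} ≤ 0 := Nat.sInf_le h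
        omega
      have hex' : ∃ m, shift ω m = 2 := by
        obtain ⟨m, hm⟩ := hex
        match m, hm with
        | 0, hm => exact absurd hm hω0
        | (k + 1), hm => exact ⟨k, hm⟩
      have hmem : ω (i + 1) = 2 := by
        have hmem := Nat.sInf_mem (s := {n | ω n = (2 : Fin 3)}) hex
        rw [h0] at hmem
        exact hmem
      have h0' : sInf {n | shift ω n = (2 : Fin 3)} = i := by
        have hle : sInf {n | shift ω n = (2 : Fin 3)} ≤ i := Nat.sInf_le hmem
        have hmem' := Nat.sInf_mem (s := {n | shift ω n = (2 : Fin 3)}) hex'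
        have hge : sInf {n | ω n = (2 : Fin 3)} ≤ sInf {n | shift ω n = (2 : Fin 3)} + 1 :=
          Nat.sInf_le hmem'
        omega
      have IH := ih (shift ω) h0' hex'
      have hikshift : ikFin 2 ω = ikFin 2 (shift ω) + 1 := by
        simp [ikFin, h0, h0']
      have hshiftn : shiftn (ikFin 2 ω) ω = shiftn (ikFin 2 (shift ω)) (shift ω) := by
        funext m
        rw [hikshift]
        rfl
      have hN : Nval ω = Nval (shift ω) + 1 := by
        simp only [Nval]
        rw [hshiftn, hikshift]
        ring
      have hs : (if ω 0 = 2 then (1 : Equiv.Perm (List Bool)) else aPerm) = aPerm :=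
        if_neg hω0
      have hinv : b (shift ω) * aPerm = (aPerm * b (shift ω))⁻¹ := by
        rw [mul_inv_rev, aPerm_inv, b_inv]
      constructor
      · rw [hN, pow_succ', pow_mul, ab_sq, hs, pairPerm_pow]
        rw [hinv, inv_pow, IH.1, inv_one]
        exact pairPerm_one
      · rw [hN, Nat.add_sub_cancel]
        obtain ⟨k, hk⟩ : ∃ k, Nval (shift ω) = k + 1 := by
          have := one_le_Nval (shift ω)
          exact ⟨Nval (shift ω) - 1, by omega⟩
        rw [hk, pow_succ', pow_mul, ab_sq, hs, pairPerm_pow]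
        intro hcontr
        have h2 := ((pairPerm_eq_one_iff _ _).1 hcontr).2
        have hk' : Nval (shift ω) - 1 = k := by omega
        exact IH.2 (by rw [hk']; exact h2)

end Grig

namespace Grig

open scoped Classical in
/-- If `i_0(ω), i_1(ω), i_2(ω)` are all finite, then
`o(a b_ω) = 2^{i_2(ω) + ε_2}`, where `ε_2 = 0` if `σ^{i_2(ω)}ω = (2,2,2,…)`
and `ε_2 = 1` otherwise. -/
theorem orderOf_a_mul_b (ω : Seq) (h : ∀ k : Fin 3, ∃ m, ω m = k) :
    orderOf (aPerm * b ω) =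
      2 ^ (ikFin 2 ω + if ∀ m, shiftn (ikFin 2 ω) ω m = 2 then 0 else 1) := by
  have hkey := key_pow (sInf {n | ω n = (2 : Fin 3)}) ω rfl (h 2)
  obtain ⟨k, hk⟩ : ∃ k, Nval ω = k + 1 := by
    have := one_le_Nval ω
    exact ⟨Nval ω - 1, by omega⟩
  have hnot : (aPerm * b ω) ^ 2 ^ k ≠ 1 := by
    have hk' : Nval ω - 1 = k := by omega
    rw [← hk']
    exact hkey.2
  have hfin : (aPerm * b ω) ^ 2 ^ (k + 1) = 1 := by
    rw [← hk]
    exact hkey.1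
  have horder : orderOf (aPerm * b ω) = 2 ^ (k + 1) :=
    orderOf_eq_prime_pow hnot hfin
  rw [horder, ← hk]
  congr 1

end Grig
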